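/- arXiv:math/0406099 — 4 statements merged into one kernel-verified Lean document; each statement's English description precedes it below -/
import Mathlib

section
/- For all real numbers α and β with β ≠ 0, the complex homogeneous cubic polynomial F = α(x₂³ + x₁²x₂ + x₀²x₂) + β(x₀x₂² + x₁³ + x₀³) in the variables x₀, x₁, x₂ has no singular point: there is no triple (x₀, x₁, x₂) ∈ ℂ³ \ {(0,0,0)} at which the three partial derivatives ∂F/∂x₀, ∂F/∂x₁, ∂F/∂x₂ all vanish simultaneously. In other words, every member of the real pencil of plane cubics spanned by x₂³ + x₁²x₂ + x₀²x₂ and x₀x₂² + x₁³ + x₀³, other than the member x₂³ + x₁²x₂ + x₀²x₂ itself (corresponding to β = 0), is a nonsingular complex plane cubic. -/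
open Complex

/-- The cubic `F_{α,β} = α(x₂³ + x₁²x₂ + x₀²x₂) + β(x₀x₂² + x₁³ + x₀³)` as a
complex polynomial function of the three variables. -/
noncomputable def Fcubic (α β : ℝ) (x₀ x₁ x₂ : ℂ) : ℂ :=
  (α : ℂ) * (x₂ ^ 3 + x₁ ^ 2 * x₂ + x₀ ^ 2 * x₂) +
    (β : ℂ) * (x₀ * x₂ ^ 2 + x₁ ^ 3 + x₀ ^ 3)

/-!
The partial derivative `∂F/∂x₁ = x₁ (3β x₁ + 2α x₂)` factors. In either case, `x₁ = 0` or
`3β x₁ = -2α x₂`, the other two partial derivatives become two binary quadratic forms in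
`(x₀, x₂)` with a common nontrivial zero, so their resultant vanishes. The two resultants are
`12 (α² + β²)²` and `36 β² (8α⁶ + 63α⁴β² + 54α²β⁴ + 27β⁶)`, both positive for real `α` and
`β ≠ 0`.
-/

/-- The resultant of `p u² + q u v + r v²` and `s u² + t u v + w v²`. -/
def binaryQuadraticResultant {R : Type*} [CommRing R] (p q r s t w : R) : R :=
  (p * w - r * s) ^ 2 - (p * t - q * s) * (q * w - r * t)

theorem binaryQuadraticResultant_eq_zero {R : Type*} [CommRing R] [NoZeroDivisors R]
    {p q r s t w u v : R} (h₁ : p * u ^ 2 + q * u * v + r * v ^ 2 = 0)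
    (h₂ : s * u ^ 2 + t * u * v + w * v ^ 2 = 0) (huv : (u, v) ≠ (0, 0)) :
    binaryQuadraticResultant p q r s t w = 0 := by
  -- The multipliers are the cofactors of the first and last columns of the Sylvester matrix.
  have hu : binaryQuadraticResultant p q r s t w * u ^ 3 = 0 := by
    unfold binaryQuadraticResultant
    linear_combination
      ((r * t ^ 2 - r * s * w - q * t * w + p * w ^ 2) * u + (r * t * w - q * w ^ 2) * v) * h₁ +
      ((r ^ 2 * s - q * r * t + q ^ 2 * w - p * r * w) * u + (q * r * w - r ^ 2 * t) * v) * h₂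
  have hv : binaryQuadraticResultant p q r s t w * v ^ 3 = 0 := by
    unfold binaryQuadraticResultant
    linear_combination
      ((p * s * t - q * s ^ 2) * u + (r * s ^ 2 - q * s * t + p * t ^ 2 - p * s * w) * v) * h₁ +
      ((p * q * s - p ^ 2 * t) * u + (q ^ 2 * s - p * r * s - p * q * t + p ^ 2 * w) * v) * h₂
  by_contra hR
  exact huv (Prod.ext (by simpa [hR] using hu) (by simpa [hR] using hv))

theorem binaryQuadraticResultant_eq_zero_of_ofReal {p q r s t w : ℝ} {u v : ℂ}
    (h₁ : p * u ^ 2 + q * u * v + r * v ^ 2 = 0) (h₂ : s * u ^ 2 + t * u * v + w * v ^ 2 = 0)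
    (huv : (u, v) ≠ (0, 0)) :
    binaryQuadraticResultant p q r s t w = 0 := by
  have hR := binaryQuadraticResultant_eq_zero h₁ h₂ huv
  unfold binaryQuadraticResultant at hR ⊢
  exact_mod_cast hR

section

variable (α β : ℝ) (x₀ x₁ x₂ : ℂ)

theorem deriv_Fcubic_fst :
    deriv (fun t => Fcubic α β t x₁ x₂) x₀ = β * (3 * x₀ ^ 2 + x₂ ^ 2) + 2 * α * x₀ * x₂ := by
  conv_lhs => simp (disch := fun_prop) [Fcubic]
  ring

theorem deriv_Fcubic_snd :
    deriv (fun t => Fcubic α β x₀ t x₂) x₁ = x₁ * (3 * β * x₁ + 2 * α * x₂) := by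
  conv_lhs => simp (disch := fun_prop) [Fcubic]
  ring

theorem deriv_Fcubic_thd :
    deriv (fun t => Fcubic α β x₀ x₁ t) x₂ =
      α * (x₀ ^ 2 + x₁ ^ 2 + 3 * x₂ ^ 2) + 2 * β * x₀ * x₂ := by
  conv_lhs => simp (disch := fun_prop) [Fcubic]
  ring

end

/-- For all real `α`, `β` with `β ≠ 0`, the complex cubic
`F = α(x₂³ + x₁²x₂ + x₀²x₂) + β(x₀x₂² + x₁³ + x₀³)` has no singular point:
there is no nonzero triple in `ℂ³` at which all three partial derivatives
of `F` vanish simultaneously. -/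
theorem pencil_nonsingular_of_beta_ne_zero (α β : ℝ) (hβ : β ≠ 0) :
    ¬ ∃ x₀ x₁ x₂ : ℂ, (x₀, x₁, x₂) ≠ (0, 0, 0) ∧
      deriv (fun t => Fcubic α β t x₁ x₂) x₀ = 0 ∧
      deriv (fun t => Fcubic α β x₀ t x₂) x₁ = 0 ∧
      deriv (fun t => Fcubic α β x₀ x₁ t) x₂ = 0 := by
  rintro ⟨x₀, x₁, x₂, hx, h₀, h₁, h₂⟩
  rw [deriv_Fcubic_fst] at h₀
  rw [deriv_Fcubic_snd] at h₁
  rw [deriv_Fcubic_thd] at h₂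
  rcases mul_eq_zero.1 h₁ with rfl | hx₁
  · have hR := binaryQuadraticResultant_eq_zero_of_ofReal (u := x₀) (v := x₂)
      (p := 3 * β) (q := 2 * α) (r := β) (s := α) (t := 2 * β) (w := 3 * α)
      (by push_cast; linear_combination h₀) (by push_cast; linear_combination h₂) (by simpa using hx)
    have hpos : 0 < 12 * (α ^ 2 + β ^ 2) ^ 2 := by positivity
    exact hpos.ne' (by unfold binaryQuadraticResultant at hR; linear_combination hR)
  · have hx₀₂ : (x₀, x₂) ≠ (0, 0) := by
      rintro ⟨⟨⟩⟩
      exact hx (by simpa [hβ] using hx₁)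
    -- the second form is `9β² ∂F/∂x₂` with `(3β x₁)²` replaced by `(2α x₂)²`
    have hR := binaryQuadraticResultant_eq_zero_of_ofReal (u := x₀) (v := x₂)
      (p := 3 * β) (q := 2 * α) (r := β)
      (s := 9 * α * β ^ 2) (t := 18 * β ^ 3) (w := 27 * α * β ^ 2 + 4 * α ^ 3)
      (by push_cast; linear_combination h₀)
      (by push_cast; linear_combination 9 * β ^ 2 * h₂ + α * (2 * α * x₂ - 3 * β * x₁) * hx₁)
      hx₀₂
    have hpos : 0 < 36 * β ^ 2 *
        (8 * α ^ 6 + 63 * α ^ 4 * β ^ 2 + 54 * α ^ 2 * β ^ 4 + 27 * β ^ 6) := by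
      positivity
    exact hpos.ne' (by unfold binaryQuadraticResultant at hR; linear_combination hR)
end

section
/- For every (α, β) ∈ ℝ² \ {(0,0)}, the cubic F_{α,β} = α(x₂³ + x₁²x₂ + x₀²x₂) + β(x₀x₂² + x₁³ + x₀³) has no real singular point: there is no (x₀, x₁, x₂) ∈ ℝ³ \ {(0,0,0)} at which the three partial derivatives ∂F_{α,β}/∂x₀, ∂F_{α,β}/∂x₁, ∂F_{α,β}/∂x₂ all vanish simultaneously. That is, every member of the real pencil of cubics spanned by x₂³ + x₁²x₂ + x₀²x₂ and x₀x₂² + x₁³ + x₀³ is nonsingular at all of its real points. -/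
/-- The cubic `F_{α,β} = α(x₂³ + x₁²x₂ + x₀²x₂) + β(x₀x₂² + x₁³ + x₀³)` as a
real polynomial function of the three variables. -/
noncomputable def FcubicR (α β : ℝ) (x₀ x₁ x₂ : ℝ) : ℝ :=
  α * (x₂ ^ 3 + x₁ ^ 2 * x₂ + x₀ ^ 2 * x₂) +
    β * (x₀ * x₂ ^ 2 + x₁ ^ 3 + x₀ ^ 3)

/-!
Write `F₀, F₁, F₂` for the partial derivatives. Since `F₁ = x₁ (2αx₂ + 3βx₁)`, there are two cases.

If `x₁ = 0`, then `F₀ = F₂ = 0` is a linear system in `(α, β)` of determinant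
`-3 (x₀² + x₂²)²`, so `(α, β) = 0`.

If `x₁ ≠ 0`, then `2αx₂ = -3βx₁`. For `β = 0` this and `F₂ = 0` give `α = 0`; otherwise
`x₂ ≠ 0`. Eliminating `α` from `F₀` gives `x₂² = 3x₀(x₁ - x₀)`, so `x₀(x₁ - x₀) > 0`, and
eliminating it from `x₂ F₂` then gives `x₁³ + 9x₀x₁² - 12x₀²x₁ + 4x₀³ = 0`. In terms of `u = x₁ - x₀` this cubic is
`2x₀³ + 9x₀²u + 12x₀u² + u³`, whose terms all have the sign of `x₀` once `x₀u > 0`.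
-/

theorem hasDerivAt_cubic {𝕜 : Type*} [NontriviallyNormedField 𝕜] (a b c d x : 𝕜) :
    HasDerivAt (fun t => a * t ^ 3 + b * t ^ 2 + c * t + d) (3 * a * x ^ 2 + 2 * b * x + c) x :=
  ((((hasDerivAt_pow 3 x).const_mul a).fun_add ((hasDerivAt_pow 2 x).const_mul b)).fun_add
    ((hasDerivAt_id' x).const_mul c)).add_const d |>.congr_deriv (by norm_num; ring)

section Partials

variable (α β x₀ x₁ x₂ : ℝ)

theorem deriv_FcubicR_x₀ :
    deriv (fun t => FcubicR α β t x₁ x₂) x₀ = 2 * α * x₀ * x₂ + β * (x₂ ^ 2 + 3 * x₀ ^ 2) := by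
  have h : (fun t => FcubicR α β t x₁ x₂) =
      fun t => β * t ^ 3 + α * x₂ * t ^ 2 + β * x₂ ^ 2 * t + (α * (x₂ ^ 3 + x₁ ^ 2 * x₂) + β * x₁ ^ 3) := by
    funext t; unfold FcubicR; ring
  rw [h, (hasDerivAt_cubic _ _ _ _ x₀).deriv]
  ring

theorem deriv_FcubicR_x₁ :
    deriv (fun t => FcubicR α β x₀ t x₂) x₁ = x₁ * (2 * α * x₂ + 3 * β * x₁) := by
  have h : (fun t => FcubicR α β x₀ t x₂) =
      fun t => β * t ^ 3 + α * x₂ * t ^ 2 + 0 * t + (α * (x₂ ^ 3 + x₀ ^ 2 * x₂) + β * (x₀ * x₂ ^ 2 + x₀ ^ 3)) := by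
    funext t; unfold FcubicR; ring
  rw [h, (hasDerivAt_cubic _ _ _ _ x₁).deriv]
  ring

theorem deriv_FcubicR_x₂ :
    deriv (fun t => FcubicR α β x₀ x₁ t) x₂ = α * (3 * x₂ ^ 2 + x₁ ^ 2 + x₀ ^ 2) + 2 * β * x₀ * x₂ := by
  have h : (fun t => FcubicR α β x₀ x₁ t) =
      fun t => α * t ^ 3 + β * x₀ * t ^ 2 + α * (x₁ ^ 2 + x₀ ^ 2) * t + β * (x₁ ^ 3 + x₀ ^ 3) := by
    funext t; unfold FcubicR; ring
  rw [h, (hasDerivAt_cubic _ _ _ _ x₂).deriv]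
  ring

end Partials

section Elimination

variable {α β x₀ x₁ x₂ : ℝ}

theorem coeffs_eq_zero_of_x₁_eq_zero (hx : (x₀, x₂) ≠ (0, 0))
    (h₀ : 2 * α * x₀ * x₂ + β * (x₂ ^ 2 + 3 * x₀ ^ 2) = 0)
    (h₂ : α * (3 * x₂ ^ 2 + x₀ ^ 2) + 2 * β * x₀ * x₂ = 0) :
    α = 0 ∧ β = 0 := by
  have hD : (x₀ ^ 2 + x₂ ^ 2) ^ 2 ≠ 0 := by
    have : x₀ ≠ 0 ∨ x₂ ≠ 0 := by simpa [or_iff_not_imp_left] using hx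
    rcases this with h | h <;> positivity
  -- Cramer's rule
  have hα : α * (x₀ ^ 2 + x₂ ^ 2) ^ 2 = 0 := by
    linear_combination (-(2 * x₀ * x₂) / 3) * h₀ + ((x₂ ^ 2 + 3 * x₀ ^ 2) / 3) * h₂
  have hβ : β * (x₀ ^ 2 + x₂ ^ 2) ^ 2 = 0 := by
    linear_combination ((3 * x₂ ^ 2 + x₀ ^ 2) / 3) * h₀ - (2 * x₀ * x₂ / 3) * h₂
  exact ⟨(mul_eq_zero.1 hα).resolve_right hD, (mul_eq_zero.1 hβ).resolve_right hD⟩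

theorem cubic_ne_zero_of_mul_sub_pos (h : 0 < x₀ * (x₁ - x₀)) :
    x₁ ^ 3 + 9 * x₀ * x₁ ^ 2 - 12 * x₀ ^ 2 * x₁ + 4 * x₀ ^ 3 ≠ 0 := by
  have hx₀ : x₀ ≠ 0 := by rintro rfl; simp at h
  intro hp
  have hpos : 0 < 2 * x₀ ^ 4 + 9 * x₀ ^ 2 * (x₀ * (x₁ - x₀)) + 12 * (x₀ * (x₁ - x₀)) ^ 2
      + x₀ * (x₁ - x₀) * (x₁ - x₀) ^ 2 := by positivity
  have : x₀ * (x₁ ^ 3 + 9 * x₀ * x₁ ^ 2 - 12 * x₀ ^ 2 * x₁ + 4 * x₀ ^ 3)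
      = 2 * x₀ ^ 4 + 9 * x₀ ^ 2 * (x₀ * (x₁ - x₀)) + 12 * (x₀ * (x₁ - x₀)) ^ 2
        + x₀ * (x₁ - x₀) * (x₁ - x₀) ^ 2 := by ring
  rw [hp, mul_zero] at this
  exact hpos.ne this

theorem coeffs_eq_zero_of_x₁_ne_zero (hx₁ : x₁ ≠ 0)
    (h₀ : 2 * α * x₀ * x₂ + β * (x₂ ^ 2 + 3 * x₀ ^ 2) = 0)
    (h₁ : 2 * α * x₂ + 3 * β * x₁ = 0)
    (h₂ : α * (3 * x₂ ^ 2 + x₁ ^ 2 + x₀ ^ 2) + 2 * β * x₀ * x₂ = 0) :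
    α = 0 ∧ β = 0 := by
  have hβ : β = 0 := by
    by_contra hβ
    have hx₂ : x₂ ≠ 0 := by
      rintro rfl
      exact mul_ne_zero (mul_ne_zero three_ne_zero hβ) hx₁ (by linarith)
    have hquad : β * (x₂ ^ 2 - 3 * x₀ * (x₁ - x₀)) = 0 := by linear_combination h₀ - x₀ * h₁
    have hp : β * (x₁ ^ 3 + 9 * x₀ * x₁ ^ 2 - 12 * x₀ ^ 2 * x₁ + 4 * x₀ ^ 3) = 0 := by
      linear_combination (-(2 * x₂) / 3) * h₂ + ((3 * x₂ ^ 2 + x₁ ^ 2 + x₀ ^ 2) / 3) * h₁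
        + ((4 * x₀ - 9 * x₁) / 3) * hquad
    refine cubic_ne_zero_of_mul_sub_pos ?_ ((mul_eq_zero.1 hp).resolve_left hβ)
    linarith [(mul_eq_zero.1 hquad).resolve_left hβ, sq_pos_of_ne_zero hx₂]
  subst hβ
  have hS : 3 * x₂ ^ 2 + x₁ ^ 2 + x₀ ^ 2 ≠ 0 := by positivity
  exact ⟨(mul_eq_zero.1 (by linarith : α * (3 * x₂ ^ 2 + x₁ ^ 2 + x₀ ^ 2) = 0)).resolve_right hS,
    rfl⟩

end Elimination

/-- For every `(α, β) ∈ ℝ² \ {(0,0)}`, the cubic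
`F_{α,β} = α(x₂³ + x₁²x₂ + x₀²x₂) + β(x₀x₂² + x₁³ + x₀³)` has no real singular
point: there is no `(x₀, x₁, x₂) ∈ ℝ³ \ {(0,0,0)}` at which the three partial
derivatives of `F_{α,β}` all vanish simultaneously. -/
theorem pencil_no_real_singular_point (α β : ℝ) (hαβ : (α, β) ≠ (0, 0)) :
    ¬ ∃ x₀ x₁ x₂ : ℝ, (x₀, x₁, x₂) ≠ (0, 0, 0) ∧
      deriv (fun t => FcubicR α β t x₁ x₂) x₀ = 0 ∧
      deriv (fun t => FcubicR α β x₀ t x₂) x₁ = 0 ∧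
      deriv (fun t => FcubicR α β x₀ x₁ t) x₂ = 0 := by
  rintro ⟨x₀, x₁, x₂, hx, h₀, h₁, h₂⟩
  rw [deriv_FcubicR_x₀] at h₀
  rw [deriv_FcubicR_x₁] at h₁
  rw [deriv_FcubicR_x₂] at h₂
  obtain ⟨rfl, rfl⟩ : α = 0 ∧ β = 0 := by
    rcases eq_or_ne x₁ 0 with rfl | hx₁
    · exact coeffs_eq_zero_of_x₁_eq_zero (by simpa using hx) h₀ (by simpa using h₂)
    · exact coeffs_eq_zero_of_x₁_ne_zero hx₁ h₀
        ((mul_eq_zero.1 h₁).resolve_left hx₁) h₂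
  exact hαβ rfl
end

section
/- Let m be an odd positive integer, k a positive integer, λ ∈ ℝ \ {0}, and μ ∈ ℂ with Re(μ) ≠ 0 and Im(μ) ≠ 0. Then the set of triples (a, b, c) ∈ ℝ³ with a ≠ 0, b ≠ 0, c ≠ 0 satisfying the two equations a = λ·b·(c² + 1)^k and a·(i − c)^m = μ (where i = √−1, and the second equation is an equation of complex numbers) is finite and has exactly m elements. -/
open Complex

/-!
Writing `a = t ^ m` with `t` real (possible since `m` is odd), the second equation says that
`z = t (i - c)` is an `m`-th root of `μ`. Conversely every `m`-th root `z` of `μ` has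
`z.re ≠ 0` and `z.im ≠ 0` (otherwise `μ` would be real or purely imaginary), so it determines
`t = z.im`, `c = -z.re / z.im` and then `a = t ^ m`, `b = a / (λ (c² + 1)^k)`, all nonzero.
Hence the solutions correspond bijectively to the `m` distinct `m`-th roots of `μ`.
-/

/-- The set of triples `(a, b, c)` of nonzero real numbers satisfying
`a = λ·b·(c² + 1)^k` (an equation of real numbers) and
`a·(i − c)^m = μ` (an equation of complex numbers). -/
def stmt3Set (m k : ℕ) (lam : ℝ) (μ : ℂ) : Set (ℝ × ℝ × ℝ) :=
  {p | p.1 ≠ 0 ∧ p.2.1 ≠ 0 ∧ p.2.2 ≠ 0 ∧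
    p.1 = lam * p.2.1 * (p.2.2 ^ 2 + 1) ^ k ∧
    (p.1 : ℂ) * (I - (p.2.2 : ℂ)) ^ m = μ}

lemma Real.exists_pow_eq_of_odd {m : ℕ} (hm : Odd m) (a : ℝ) : ∃ t : ℝ, t ^ m = a := by
  rcases le_total 0 a with ha | ha
  · exact ⟨a ^ (m⁻¹ : ℝ), Real.rpow_inv_natCast_pow ha hm.pos.ne'⟩
  · refine ⟨-(-a) ^ (m⁻¹ : ℝ), ?_⟩
    rw [hm.neg_pow, Real.rpow_inv_natCast_pow (neg_nonneg.2 ha) hm.pos.ne', neg_neg]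

namespace Complex

open ComplexConjugate

lemma ncard_setOf_pow_eq {n : ℕ} (hn : 0 < n) {a : ℂ} (ha : a ≠ 0) :
    {z : ℂ | z ^ n = a}.ncard = n := by
  classical
  have hζ := isPrimitiveRoot_exp n hn.ne'
  rw [← Polynomial.nthRootsFinset_toSet hn, Set.ncard_coe_finset,
    Polynomial.nthRootsFinset_def, Multiset.toFinset_card_of_nodup (hζ.nthRoots_nodup ha),
    hζ.card_nthRoots, if_pos (IsAlgClosed.exists_pow_nat_eq a hn)]

lemma im_ne_zero_of_pow_eq {n : ℕ} {z a : ℂ} (h : z ^ n = a) (ha : a.im ≠ 0) : z.im ≠ 0 := by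
  intro hz
  rw [← conj_eq_iff_im] at hz
  exact ha (conj_eq_iff_im.1 (by rw [← h, map_pow, hz]))

lemma re_ne_zero_of_pow_eq {n : ℕ} (hn : Odd n) {z a : ℂ} (h : z ^ n = a) (ha : a.re ≠ 0) :
    z.re ≠ 0 := by
  intro hz
  have hconj : conj z = -z := Complex.ext (by simp [hz]) (by simp)
  have : conj a = -a := by rw [← h, map_pow, hconj, hn.neg_pow]
  have hre := congrArg re this
  simp only [conj_re, neg_re] at hre
  exact ha (by linarith)

lemma ofReal_im_mul_I_sub {z : ℂ} (hz : z.im ≠ 0) :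
    (z.im : ℂ) * (I - ((-z.re / z.im : ℝ) : ℂ)) = z := by
  apply Complex.ext <;> simp [field]

end Complex

noncomputable def tripleOfRoot (m k : ℕ) (lam : ℝ) (z : ℂ) : ℝ × ℝ × ℝ :=
  (z.im ^ m, z.im ^ m / (lam * ((-z.re / z.im) ^ 2 + 1) ^ k), -z.re / z.im)

section

variable {m k : ℕ} {lam : ℝ} {μ : ℂ}

lemma tripleOfRoot_mem (hlam : lam ≠ 0) {z : ℂ} (hz : z ^ m = μ) (hre : z.re ≠ 0)
    (him : z.im ≠ 0) : tripleOfRoot m k lam z ∈ stmt3Set m k lam μ := by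
  have hc : (-z.re / z.im) ^ 2 + 1 ≠ 0 := by positivity
  refine ⟨pow_ne_zero _ him, div_ne_zero (pow_ne_zero _ him) (mul_ne_zero hlam (pow_ne_zero _ hc)),
    div_ne_zero (neg_ne_zero.2 hre) him, by simp only [tripleOfRoot]; field_simp, ?_⟩
  simp only [tripleOfRoot]
  rw [ofReal_pow, ← mul_pow, ofReal_im_mul_I_sub him, hz]

lemma exists_root_of_mem_stmt3Set (hm : Odd m) {p : ℝ × ℝ × ℝ} (hp : p ∈ stmt3Set m k lam μ) :
    ∃ z : ℂ, z ^ m = μ ∧ tripleOfRoot m k lam z = p := by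
  obtain ⟨a, b, c⟩ := p
  obtain ⟨ha, -, -, hab, hμ⟩ := hp
  dsimp only at ha hab hμ
  obtain ⟨t, rfl⟩ := Real.exists_pow_eq_of_odd hm a
  have ht : t ≠ 0 := by rintro rfl; exact ha (zero_pow hm.pos.ne')
  have hden : lam * (c ^ 2 + 1) ^ k ≠ 0 := by
    rintro h; apply ha; rw [hab]; linear_combination b * h
  refine ⟨t * (I - c), by rw [mul_pow, ← ofReal_pow]; exact hμ, ?_⟩
  have hre : (t * (I - c)).re = -(t * c) := by simp
  have him : (t * (I - c)).im = t := by simp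
  have hc : - -(t * c) / t = c := by rw [neg_neg, mul_div_cancel_left₀ c ht]
  simp only [tripleOfRoot, hre, him, hc, Prod.mk.injEq, and_true, true_and]
  exact (eq_div_of_mul_eq hden (by rw [hab]; ring)).symm

lemma tripleOfRoot_injOn (hm : Odd m) : Set.InjOn (tripleOfRoot m k lam) {z | z.im ≠ 0} := by
  intro z _ w hw h
  simp only [tripleOfRoot, Prod.mk.injEq] at h
  obtain ⟨him, -, hc⟩ := h
  rw [hm.pow_inj] at him
  rw [him] at hc
  exact Complex.ext (neg_inj.1 ((div_left_inj' hw).1 hc)) him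

lemma stmt3Set_eq_image (hm : Odd m) (hlam : lam ≠ 0) (hre : μ.re ≠ 0) (him : μ.im ≠ 0) :
    stmt3Set m k lam μ = tripleOfRoot m k lam '' {z | z ^ m = μ} := by
  ext p
  refine ⟨fun hp => ?_, ?_⟩
  · obtain ⟨z, hz, rfl⟩ := exists_root_of_mem_stmt3Set hm hp
    exact ⟨z, hz, rfl⟩
  · rintro ⟨z, hz, rfl⟩
    exact tripleOfRoot_mem hlam hz (re_ne_zero_of_pow_eq hm hz hre) (im_ne_zero_of_pow_eq hz him)

end

theorem stmt3_count_general (m k : ℕ) (hmodd : Odd m)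
    (lam : ℝ) (hlam : lam ≠ 0) (μ : ℂ) (hre : μ.re ≠ 0) (him : μ.im ≠ 0) :
    (stmt3Set m k lam μ).Finite ∧ (stmt3Set m k lam μ).ncard = m := by
  have hμ : μ ≠ 0 := fun h => hre (by simp [h])
  have hroots : {z : ℂ | z ^ m = μ}.ncard = m := ncard_setOf_pow_eq hmodd.pos hμ
  have hinj : Set.InjOn (tripleOfRoot m k lam) {z : ℂ | z ^ m = μ} :=
    (tripleOfRoot_injOn hmodd).mono fun z hz => im_ne_zero_of_pow_eq hz him
  have hfin : {z : ℂ | z ^ m = μ}.Finite :=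
    Set.finite_of_ncard_pos (by rw [hroots]; exact hmodd.pos)
  rw [stmt3Set_eq_image hmodd hlam hre him, hinj.ncard_image, hroots]
  exact ⟨hfin.image _, rfl⟩

/-- Let `m` be an odd positive integer, `k` a positive integer, `λ` a nonzero
real number, and `μ` a complex number with nonzero real and imaginary parts.
Then the set of triples `(a, b, c) ∈ (ℝ*)³` with `a = λ·b·(c² + 1)^k` and
`a·(i − c)^m = μ` is finite and has exactly `m` elements. -/
theorem stmt3_count (m k : ℕ) (hmodd : Odd m) (hm : 0 < m) (hk : 0 < k)
    (lam : ℝ) (hlam : lam ≠ 0) (μ : ℂ) (hre : μ.re ≠ 0) (him : μ.im ≠ 0) :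
    (stmt3Set m k lam μ).Finite ∧ (stmt3Set m k lam μ).ncard = m :=
  stmt3_count_general m k hmodd lam hlam μ hre him
end

section
/- Let m₁ and m₂ be odd positive integers and m₃ an even positive integer with m₂ < m₃ and m₁ < m₃. Then there exists an open subset U of ℂ², dense in ℂ² and contained in (ℂ \ ℝ) × (ℂ \ ℝ), such that for every (ξ, η) ∈ U the set of triples (a, b, τ) ∈ ℝ × ℝ × ℂ satisfying a·τ^{m₁} = ξ and b·τ^{m₂}·(τ − 1)^{m₃ − m₂} = η is finite and has exactly m₁·(m₃ − m₂) elements. -/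
/-!
Since `ξ` and `η` are nonzero, `a` and `b` are determined by `τ`, so one counts the `τ` with
`τ ^ m₁ ∈ ℝ ξ` and `τ ^ m₂ (τ - 1) ^ (m₃ - m₂) ∈ ℝ η`. The first condition puts `τ` on one of
`m₁` real lines `ℝ v` through `0`. For `τ = s v` the second one becomes
`(s v - 1) ^ (m₃ - m₂) ∈ ℝ (η conj v ^ m₂)`, which puts `s v - 1` on one of `m₃ - m₂` real lines
through `0`, and each of them meets the affine line `ℝ v - 1` exactly once, provided it is neither
real nor parallel to `v`. These provisos are the genericity conditions; they are open because the
roots of `ξ` depend continuously on `ξ` off the real axis, and dense because for fixed `ξ` they only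
keep `η` off finitely many real lines.
-/

open Complex

/-- The set of triples `(a, b, τ) ∈ ℝ × ℝ × ℂ` with `a·τ^{m₁} = ξ` and
`b·τ^{m₂}·(τ − 1)^{m₃ − m₂} = η`. -/
def stmt4Set (m₁ m₂ m₃ : ℕ) (ξ η : ℂ) : Set (ℝ × ℝ × ℂ) :=
  {q | (q.1 : ℂ) * q.2.2 ^ m₁ = ξ ∧
    (q.2.1 : ℂ) * q.2.2 ^ m₂ * (q.2.2 - 1) ^ (m₃ - m₂) = η}

open Real ComplexConjugate

lemma ne_zero_of_im_ne_zero {z : ℂ} (h : z.im ≠ 0) : z ≠ 0 := by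
  rintro rfl
  exact h rfl

lemma im_ne_zero_of_pow_im_ne_zero {z : ℂ} {m : ℕ} (h : (z ^ m).im ≠ 0) : z.im ≠ 0 := by
  contrapose! h
  rw [← re_add_im z, h, ofReal_zero, zero_mul, add_zero, ← ofReal_pow, ofReal_im]

lemma neg_one_pow_mul_im (k : ℕ) (z : ℂ) : ((-1) ^ k * z).im = (-1) ^ k * z.im := by
  rw [show (-1 : ℂ) ^ k = ((-1 : ℝ) ^ k : ℝ) by push_cast; rfl, im_ofReal_mul]

lemma sq_eq_norm_sq_of_im_eq_zero {z : ℂ} (hz : z.im = 0) : z ^ 2 = (‖z‖ ^ 2 : ℝ) := by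
  rw [← normSq_eq_norm_sq, ← mul_conj, conj_eq_iff_im.2 hz, sq]

lemma conj_mul_im_eq_zero_iff {w : ℂ} (hw : w ≠ 0) {z : ℂ} :
    (conj w * z).im = 0 ↔ ∃ r : ℝ, z = r * w := by
  constructor
  · intro h
    refine ⟨(conj w * z).re / normSq w, ?_⟩
    have hc : ((conj w * z).re : ℂ) = conj w * z := ext rfl (by simp [h])
    have hw' : conj w ≠ 0 := (map_ne_zero _).2 hw
    rw [ofReal_div, hc, ← mul_conj]
    field_simp
  · rintro ⟨r, rfl⟩
    rw [mul_left_comm, ← normSq_eq_conj_mul_self, ← ofReal_mul, ofReal_im]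

lemma exists_ofReal_mul_eq_iff {ζ : ℂ} (hζ : ζ ≠ 0) {z : ℂ} :
    (∃ a : ℝ, a * z = ζ) ↔ z ≠ 0 ∧ (conj ζ * z).im = 0 := by
  constructor
  · rintro ⟨a, rfl⟩
    refine ⟨right_ne_zero_of_mul hζ, ?_⟩
    rw [map_mul, conj_ofReal, mul_assoc, ← normSq_eq_conj_mul_self, ← ofReal_mul, ofReal_im]
  · rintro ⟨hz, h⟩
    have h' : (conj z * ζ).im = 0 := by
      rw [← neg_eq_zero, ← conj_im, map_mul, conj_conj, mul_comm, h]
    obtain ⟨a, ha⟩ := (conj_mul_im_eq_zero_iff hz).1 h'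
    exact ⟨a, ha.symm⟩

lemma conj_mul_ofReal_mul_sub_one_im (e v : ℂ) (s : ℝ) :
    (conj e * (s * v - 1)).im = s * (conj e * v).im + e.im := by
  simp only [mul_sub, mul_one, sub_im, conj_im, mul_left_comm (conj e), im_ofReal_mul]
  ring

lemma isPrimitiveRoot_exp_pi_I_div {m : ℕ} (hm : m ≠ 0) :
    IsPrimitiveRoot (exp (π * I / m)) (2 * m) := by
  convert isPrimitiveRoot_exp (2 * m) (by positivity) using 2
  push_cast
  field_simp

lemma exp_pi_I_div_pow_self {m : ℕ} (hm : m ≠ 0) : exp (π * I / m) ^ m = -1 := by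
  rw [← Complex.exp_nat_mul, mul_div_cancel₀ _ (by exact_mod_cast hm), exp_pi_mul_I]

lemma exists_eq_ofReal_mul_exp_pi_I_div_pow {m : ℕ} (hm : m ≠ 0) {u : ℂ} (hu : (u ^ m).im = 0) :
    ∃ k : Fin m, ∃ s : ℝ, u = s * exp (π * I / m) ^ (k : ℕ) := by
  have : NeZero m := ⟨hm⟩
  rcases eq_or_ne u 0 with rfl | hu0
  · exact ⟨0, 0, by simp⟩
  have hnorm : (‖u‖ : ℂ) ≠ 0 := by exact_mod_cast norm_ne_zero_iff.2 hu0
  have : NeZero (2 * m) := ⟨by positivity⟩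
  have hunit : (u / ‖u‖) ^ (2 * m) = 1 := by
    rw [div_pow, div_eq_one_iff_eq (pow_ne_zero _ hnorm), mul_comm, pow_mul,
      sq_eq_norm_sq_of_im_eq_zero hu, norm_pow]
    push_cast
    ring
  obtain ⟨j, hj, hωj⟩ := (isPrimitiveRoot_exp_pi_I_div hm).eq_pow_of_pow_eq_one hunit
  have hu : u = ‖u‖ * exp (π * I / m) ^ j := by rw [hωj]; field_simp
  by_cases hjm : j < m
  · exact ⟨⟨j, hjm⟩, ‖u‖, hu⟩
  · obtain ⟨i, rfl⟩ := Nat.exists_eq_add_of_le (not_lt.1 hjm)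
    refine ⟨⟨i, by omega⟩, -‖u‖, hu.trans ?_⟩
    rw [pow_add, exp_pi_I_div_pow_self hm]
    push_cast
    ring

lemma eq_of_ofReal_mul_exp_pi_I_div_pow_eq {m : ℕ} {s s' : ℝ} (hs : s ≠ 0) {k k' : Fin m}
    (h : s * exp (π * I / m) ^ (k : ℕ) = s' * exp (π * I / m) ^ (k' : ℕ)) : k = k' := by
  have hm : m ≠ 0 := k.pos.ne'
  have hω := isPrimitiveRoot_exp_pi_I_div hm
  have hnorm : ‖exp (π * I / m)‖ = 1 := hω.norm'_eq_one (by positivity)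
  have habs : |s| = |s'| := by simpa [hnorm] using congrArg norm h
  have hsq : (s : ℂ) ^ 2 = s' ^ 2 := by exact_mod_cast sq_eq_sq_iff_abs_eq_abs _ _ |>.2 habs
  have hpow : exp (π * I / m) ^ (2 * (k : ℕ)) = exp (π * I / m) ^ (2 * (k' : ℕ)) := by
    have h2 := congrArg (· ^ 2) h
    simp only [mul_pow, ← hsq] at h2
    rw [mul_comm 2, mul_comm 2, pow_mul, pow_mul]
    exact mul_left_cancel₀ (by exact_mod_cast pow_ne_zero 2 hs) h2
  have := hω.pow_inj (by omega) (by omega) hpow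
  exact Fin.ext (by omega)

/-- For `ζ ≠ 0`, the `z` with `z ^ m ∈ ℝ ζ` form the `m` real lines spanned by the
`rootLineDir m ζ k`. -/
noncomputable def rootLineDir (m : ℕ) (ζ : ℂ) (k : Fin m) : ℂ :=
  ζ ^ (m⁻¹ : ℂ) * exp (π * I / m) ^ (k : ℕ)

lemma rootLineDir_pow (ζ : ℂ) {m : ℕ} (k : Fin m) :
    rootLineDir m ζ k ^ m = (-1) ^ (k : ℕ) * ζ := by
  rw [rootLineDir, mul_pow, cpow_nat_inv_pow _ k.pos.ne', pow_right_comm,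
    exp_pi_I_div_pow_self k.pos.ne', mul_comm]

lemma rootLineDir_ne_zero {ζ : ℂ} (hζ : ζ ≠ 0) {m : ℕ} (k : Fin m) : rootLineDir m ζ k ≠ 0 := by
  intro h
  have := rootLineDir_pow ζ k
  rw [h, zero_pow k.pos.ne', eq_comm, mul_eq_zero] at this
  exact this.elim (pow_ne_zero _ (by norm_num)) hζ

lemma rootLineDir_im_ne_zero {ζ : ℂ} (hζ : ζ.im ≠ 0) {m : ℕ} (k : Fin m) :
    (rootLineDir m ζ k).im ≠ 0 :=
  im_ne_zero_of_pow_im_ne_zero (m := m) (by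
    rw [rootLineDir_pow, neg_one_pow_mul_im]
    exact mul_ne_zero (pow_ne_zero _ (by norm_num)) hζ)

lemma conj_mul_rootLineDir_pow_im (ζ : ℂ) {m : ℕ} (k : Fin m) :
    (conj ζ * rootLineDir m ζ k ^ m).im = 0 := by
  rw [rootLineDir_pow, mul_left_comm, neg_one_pow_mul_im, ← normSq_eq_conj_mul_self, ofReal_im,
    mul_zero]

lemma exists_eq_ofReal_mul_rootLineDir {m : ℕ} (hm : m ≠ 0) {ζ : ℂ} (hζ : ζ ≠ 0) {z : ℂ}
    (h : (conj ζ * z ^ m).im = 0) : ∃ k : Fin m, ∃ s : ℝ, z = s * rootLineDir m ζ k := by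
  set w := ζ ^ (m⁻¹ : ℂ)
  have hw : w ^ m = ζ := cpow_nat_inv_pow ζ hm
  have hw0 : w ≠ 0 := by rintro h0; rw [h0, zero_pow hm] at hw; exact hζ hw.symm
  have hquot : ((z / w) ^ m).im = 0 := by
    have : (z / w) ^ m = ((normSq ζ)⁻¹ : ℝ) * (conj ζ * z ^ m) := by
      rw [div_pow, hw, div_eq_mul_inv, inv_def]; ring
    rw [this, im_ofReal_mul, h, mul_zero]
  obtain ⟨k, s, hs⟩ := exists_eq_ofReal_mul_exp_pi_I_div_pow hm hquot
  refine ⟨k, s, ?_⟩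
  rw [rootLineDir, ← mul_assoc, mul_right_comm, ← hs, div_mul_cancel₀ _ hw0]

lemma eq_of_ofReal_mul_rootLineDir_eq {m : ℕ} {ζ : ℂ} (hζ : ζ ≠ 0) {s s' : ℝ} (hs : s ≠ 0)
    {k k' : Fin m} (h : s * rootLineDir m ζ k = s' * rootLineDir m ζ k') : k = k' := by
  have hw0 : ζ ^ (m⁻¹ : ℂ) ≠ 0 := left_ne_zero_of_mul (rootLineDir_ne_zero hζ k)
  refine eq_of_ofReal_mul_exp_pi_I_div_pow_eq (s' := s') hs (mul_left_cancel₀ hw0 ?_)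
  simp only [rootLineDir] at h
  linear_combination h

/-- The `s` at which the affine line `s ↦ s * v - 1` meets the real line spanned by
`rootLineDir n ζ j`. -/
noncomputable def lineParam (n : ℕ) (ζ v : ℂ) (j : Fin n) : ℝ :=
  -(rootLineDir n ζ j).im / (conj (rootLineDir n ζ j) * v).im

section lineParam

variable {n : ℕ} {ζ v : ℂ}

lemma conj_mul_ofReal_mul_rootLineDir_pow_im (r : ℝ) (j : Fin n) :
    (conj ζ * (r * rootLineDir n ζ j) ^ n).im = 0 := by
  rw [mul_pow, ← ofReal_pow, mul_left_comm, im_ofReal_mul, conj_mul_rootLineDir_pow_im, mul_zero]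

lemma conj_rootLineDir_mul_im_ne_zero (hζv : (conj ζ * v ^ n).im ≠ 0) (j : Fin n) :
    (conj (rootLineDir n ζ j) * v).im ≠ 0 := by
  have hζ : ζ ≠ 0 := (map_ne_zero _).1 (left_ne_zero_of_mul (ne_zero_of_im_ne_zero hζv))
  intro h
  obtain ⟨r, rfl⟩ := (conj_mul_im_eq_zero_iff (rootLineDir_ne_zero hζ j)).1 h
  exact hζv (conj_mul_ofReal_mul_rootLineDir_pow_im r j)

lemma lineParam_ne_zero (hζ : ζ.im ≠ 0) (hζv : (conj ζ * v ^ n).im ≠ 0) (j : Fin n) :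
    lineParam n ζ v j ≠ 0 :=
  div_ne_zero (neg_ne_zero.2 (rootLineDir_im_ne_zero hζ j))
    (conj_rootLineDir_mul_im_ne_zero hζv j)

lemma exists_lineParam_mul_sub_one_eq (hζv : (conj ζ * v ^ n).im ≠ 0) (j : Fin n) :
    ∃ r : ℝ, lineParam n ζ v j * v - 1 = r * rootLineDir n ζ j := by
  have hζ : ζ ≠ 0 := (map_ne_zero _).1 (left_ne_zero_of_mul (ne_zero_of_im_ne_zero hζv))
  refine (conj_mul_im_eq_zero_iff (rootLineDir_ne_zero hζ j)).1 ?_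
  rw [conj_mul_ofReal_mul_sub_one_im, lineParam,
    div_mul_cancel₀ _ (conj_rootLineDir_mul_im_ne_zero hζv j)]
  ring

lemma conj_mul_ofReal_mul_sub_one_pow_im_eq_zero_iff (hn : n ≠ 0)
    (hζv : (conj ζ * v ^ n).im ≠ 0) (s : ℝ) :
    (conj ζ * (s * v - 1) ^ n).im = 0 ↔ ∃ j, s = lineParam n ζ v j := by
  have hζ : ζ ≠ 0 := (map_ne_zero _).1 (left_ne_zero_of_mul (ne_zero_of_im_ne_zero hζv))
  constructor
  · intro h
    obtain ⟨j, r, hr⟩ := exists_eq_ofReal_mul_rootLineDir hn hζ h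
    have hline : (conj (rootLineDir n ζ j) * (s * v - 1)).im = 0 :=
      (conj_mul_im_eq_zero_iff (rootLineDir_ne_zero hζ j)).2 ⟨r, hr⟩
    rw [conj_mul_ofReal_mul_sub_one_im] at hline
    refine ⟨j, ?_⟩
    rw [lineParam, eq_div_iff (conj_rootLineDir_mul_im_ne_zero hζv j)]
    linarith
  · rintro ⟨j, rfl⟩
    obtain ⟨r, hr⟩ := exists_lineParam_mul_sub_one_eq hζv j
    rw [hr, conj_mul_ofReal_mul_rootLineDir_pow_im]

lemma lineParam_injective (hζ : ζ.im ≠ 0) (hv : v.im ≠ 0) (hζv : (conj ζ * v ^ n).im ≠ 0) :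
    Function.Injective (lineParam n ζ v) := by
  intro j j' h
  obtain ⟨r, hr⟩ := exists_lineParam_mul_sub_one_eq hζv j
  obtain ⟨r', hr'⟩ := exists_lineParam_mul_sub_one_eq hζv j'
  have hr0 : r ≠ 0 := by
    rintro rfl
    have h1 : (lineParam n ζ v j : ℂ) * v = 1 := by
      rw [← sub_eq_zero, hr, ofReal_zero, zero_mul]
    replace h1 := congrArg im h1
    rw [im_ofReal_mul, one_im] at h1
    exact mul_ne_zero (lineParam_ne_zero hζ hζv j) hv h1
  rw [← h] at hr'
  exact eq_of_ofReal_mul_rootLineDir_eq (ne_zero_of_im_ne_zero hζ) hr0 (hr.symm.trans hr')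

end lineParam

/-- On the line `ℝ v`, `v = rootLineDir m₁ ξ k`, the last two conditions keep the lines of the
second equation off the real axis and not parallel to `v`, respectively. -/
def IsGeneric (m₁ m₂ m₃ : ℕ) (ξ η : ℂ) : Prop :=
  ξ.im ≠ 0 ∧ η.im ≠ 0 ∧ ∀ k : Fin m₁,
    (conj η * rootLineDir m₁ ξ k ^ m₂).im ≠ 0 ∧ (conj η * rootLineDir m₁ ξ k ^ m₃).im ≠ 0

def passageSet (m₁ m₂ n : ℕ) (ξ η : ℂ) : Set ℂ :=
  {τ | (∃ a : ℝ, a * τ ^ m₁ = ξ) ∧ ∃ b : ℝ, b * (τ ^ m₂ * (τ - 1) ^ n) = η}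

/-- The `τ` on the `k`-th line of the first equation for which `τ - 1` lies on the `j`-th line of
the second. -/
noncomputable def passageParam (m₁ m₂ n : ℕ) (ξ η : ℂ) (kj : Fin m₁ × Fin n) : ℂ :=
  lineParam n (η * conj (rootLineDir m₁ ξ kj.1) ^ m₂) (rootLineDir m₁ ξ kj.1) kj.2 *
    rootLineDir m₁ ξ kj.1

lemma conj_mul_ofReal_mul_pow_mul_sub_one_pow (η v : ℂ) (s : ℝ) (m₂ n : ℕ) :
    conj η * ((s * v) ^ m₂ * (s * v - 1) ^ n) =
      (s ^ m₂ : ℝ) * (conj (η * conj v ^ m₂) * (s * v - 1) ^ n) := by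
  simp only [map_mul, map_pow, conj_conj]
  push_cast
  ring

section passage

variable {m₁ m₂ n : ℕ} {ξ η : ℂ}

lemma IsGeneric.lineParam_conditions (h : IsGeneric m₁ m₂ (m₂ + n) ξ η) (k : Fin m₁) :
    (η * conj (rootLineDir m₁ ξ k) ^ m₂).im ≠ 0 ∧ (rootLineDir m₁ ξ k).im ≠ 0 ∧
      (conj (η * conj (rootLineDir m₁ ξ k) ^ m₂) * rootLineDir m₁ ξ k ^ n).im ≠ 0 := by
  obtain ⟨hξ, -, hη⟩ := h
  refine ⟨?_, rootLineDir_im_ne_zero hξ k, ?_⟩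
  · rw [← neg_ne_zero, ← conj_im, map_mul, map_pow, conj_conj]
    exact (hη k).1
  · rw [map_mul, map_pow, conj_conj, mul_assoc, ← pow_add]
    exact (hη k).2

lemma passageSet_eq_range (hm₁ : m₁ ≠ 0) (hn : n ≠ 0) (h : IsGeneric m₁ m₂ (m₂ + n) ξ η) :
    passageSet m₁ m₂ n ξ η = Set.range (passageParam m₁ m₂ n ξ η) := by
  have hξ0 := ne_zero_of_im_ne_zero h.1
  ext τ
  rw [passageSet, Set.mem_ofPred_eq, exists_ofReal_mul_eq_iff hξ0,
    exists_ofReal_mul_eq_iff (ne_zero_of_im_ne_zero h.2.1)]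
  constructor
  · rintro ⟨⟨hτ, h₁⟩, -, h₂⟩
    obtain ⟨k, s, rfl⟩ := exists_eq_ofReal_mul_rootLineDir hm₁ hξ0 h₁
    obtain ⟨-, -, hζv⟩ := h.lineParam_conditions k
    have hs : s ≠ 0 := by
      rintro rfl
      simp [hm₁] at hτ
    rw [conj_mul_ofReal_mul_pow_mul_sub_one_pow, im_ofReal_mul, mul_eq_zero,
      conj_mul_ofReal_mul_sub_one_pow_im_eq_zero_iff hn hζv] at h₂
    obtain ⟨j, rfl⟩ := h₂.resolve_left (pow_ne_zero _ hs)
    exact ⟨(k, j), rfl⟩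
  · rintro ⟨⟨k, j⟩, rfl⟩
    obtain ⟨hζ, hv, hζv⟩ := h.lineParam_conditions k
    have hσ := lineParam_ne_zero hζ hζv j
    have hτ : (passageParam m₁ m₂ n ξ η (k, j)).im ≠ 0 := by
      rw [passageParam, im_ofReal_mul]
      exact mul_ne_zero hσ hv
    refine ⟨⟨pow_ne_zero _ (ne_zero_of_im_ne_zero hτ), conj_mul_ofReal_mul_rootLineDir_pow_im _ k⟩,
      mul_ne_zero (pow_ne_zero _ (ne_zero_of_im_ne_zero hτ)) (pow_ne_zero _ ?_), ?_⟩
    · refine sub_ne_zero.2 fun h1 => hτ ?_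
      rw [h1, one_im]
    · rw [passageParam, conj_mul_ofReal_mul_pow_mul_sub_one_pow, im_ofReal_mul,
        (conj_mul_ofReal_mul_sub_one_pow_im_eq_zero_iff hn hζv _).2 ⟨j, rfl⟩, mul_zero]

lemma passageParam_injective (h : IsGeneric m₁ m₂ (m₂ + n) ξ η) :
    Function.Injective (passageParam m₁ m₂ n ξ η) := by
  rintro ⟨k, j⟩ ⟨k', j'⟩ hkj
  obtain ⟨hζ, hv, hζv⟩ := h.lineParam_conditions k
  have hξ0 := ne_zero_of_im_ne_zero h.1
  obtain rfl : k = k' := eq_of_ofReal_mul_rootLineDir_eq hξ0 (lineParam_ne_zero hζ hζv j) hkj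
  have hσ := mul_right_cancel₀ (rootLineDir_ne_zero hξ0 k) hkj
  exact congrArg (k, ·) (lineParam_injective hζ hv hζv (ofReal_injective hσ))

end passage

lemma image_stmt4Set (m₁ m₂ n : ℕ) (ξ η : ℂ) :
    (fun q : ℝ × ℝ × ℂ => q.2.2) '' stmt4Set m₁ m₂ (m₂ + n) ξ η = passageSet m₁ m₂ n ξ η := by
  ext τ
  simp [stmt4Set, passageSet, mul_assoc]

lemma injOn_stmt4Set {m₁ m₂ m₃ : ℕ} {ξ η : ℂ} (hξ : ξ ≠ 0) (hη : η ≠ 0) :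
    Set.InjOn (fun q : ℝ × ℝ × ℂ => q.2.2) (stmt4Set m₁ m₂ m₃ ξ η) := by
  rintro ⟨a, b, τ⟩ ⟨ha, hb⟩ ⟨a', b', τ'⟩ ⟨ha', hb'⟩ (rfl : τ = τ')
  dsimp only at ha hb ha' hb'
  rw [mul_assoc] at hb hb'
  have ha'' := mul_right_cancel₀ (right_ne_zero_of_mul (ha.symm ▸ hξ)) (ha.trans ha'.symm)
  have hb'' := mul_right_cancel₀ (right_ne_zero_of_mul (hb.symm ▸ hη)) (hb.trans hb'.symm)
  rw [ofReal_inj] at ha'' hb''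
  rw [ha'', hb'']

lemma continuousAt_rootLineDir {m : ℕ} (k : Fin m) {ξ : ℂ} (hξ : ξ ∈ slitPlane) :
    ContinuousAt (fun ξ => rootLineDir m ξ k) ξ :=
  (continuousAt_cpow_const hξ).mul continuousAt_const

lemma isOpen_setOf_isGeneric (m₁ m₂ m₃ : ℕ) :
    IsOpen {p : ℂ × ℂ | IsGeneric m₁ m₂ m₃ p.1 p.2} := by
  refine isOpen_iff_mem_nhds.2 fun p hp => ?_
  have hdir (k : Fin m₁) : ContinuousAt (fun q : ℂ × ℂ => rootLineDir m₁ q.1 k) p :=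
    (continuousAt_rootLineDir k (Or.inr hp.1)).comp continuousAt_fst
  have him (i : ℕ) (k : Fin m₁) :
      ContinuousAt (fun q : ℂ × ℂ => (conj q.2 * rootLineDir m₁ q.1 k ^ i).im) p :=
    continuous_im.continuousAt.comp
      ((continuous_conj.comp continuous_snd).continuousAt.mul ((hdir k).pow i))
  filter_upwards [(continuous_im.comp continuous_fst).continuousAt.eventually_ne hp.1,
    (continuous_im.comp continuous_snd).continuousAt.eventually_ne hp.2.1,
    Filter.eventually_all.2 fun k => (him m₂ k).eventually_ne (hp.2.2 k).1,
    Filter.eventually_all.2 fun k => (him m₃ k).eventually_ne (hp.2.2 k).2] with q h₁ h₂ h₃ h₄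
  exact ⟨h₁, h₂, fun k => ⟨h₃ k, h₄ k⟩⟩

lemma dense_setOf_im_ne_zero : Dense {z : ℂ | z.im ≠ 0} :=
  (dense_compl_singleton (0 : ℝ)).preimage isOpenMap_im

lemma dense_setOf_conj_mul_im_ne_zero {z : ℂ} (hz : z ≠ 0) :
    Dense {η : ℂ | (conj η * z).im ≠ 0} :=
  dense_setOf_im_ne_zero.preimage
    ((Homeomorph.mulRight₀ z hz).isOpenMap.comp conjCLE.toHomeomorph.isOpenMap)

lemma dense_setOf_forall_conj_mul_im_ne_zero {Z : Set ℂ} (hZ : Z.Finite) (h0 : 0 ∉ Z) :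
    Dense {η : ℂ | ∀ z ∈ Z, (conj η * z).im ≠ 0} := by
  simpa only [Set.ofPred_forall] using dense_biInter_of_isOpen
    (fun z _ => isOpen_ne_fun (by fun_prop) continuous_const) hZ.countable
    (fun z hz => dense_setOf_conj_mul_im_ne_zero (ne_of_mem_of_not_mem hz h0))

lemma dense_setOf_isGeneric (m₁ m₂ m₃ : ℕ) :
    Dense {p : ℂ × ℂ | IsGeneric m₁ m₂ m₃ p.1 p.2} := by
  refine dense_iff_inter_open.2 fun W hW ⟨⟨x, y⟩, hxy⟩ => ?_
  obtain ⟨A, B, hA, hB, hxA, hyB, hAB⟩ := isOpen_prod_iff.1 hW x y hxy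
  obtain ⟨ξ, hξA, hξ⟩ := dense_setOf_im_ne_zero.inter_open_nonempty A hA ⟨x, hxA⟩
  set Z : Set ℂ := insert 1 (Set.range (fun k : Fin m₁ => rootLineDir m₁ ξ k ^ m₂) ∪
    Set.range (fun k : Fin m₁ => rootLineDir m₁ ξ k ^ m₃))
  have hZ : Z.Finite := ((Set.finite_range _).union (Set.finite_range _)).insert 1
  have h0 : 0 ∉ Z := by
    simp [Z, rootLineDir_ne_zero (ne_zero_of_im_ne_zero hξ)]
  obtain ⟨η, hηB, hη⟩ :=
    (dense_setOf_forall_conj_mul_im_ne_zero hZ h0).inter_open_nonempty B hB ⟨y, hyB⟩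
  refine ⟨(ξ, η), hAB ⟨hξA, hηB⟩, hξ, ?_, fun k => ⟨hη _ ?_, hη _ ?_⟩⟩
  · simpa using hη 1 (Set.mem_insert _ _)
  · simp [Z]
  · simp [Z]

theorem stmt4_count_general (m₁ m₂ m₃ : ℕ)
    (h₁pos : 0 < m₁) (h₂₃ : m₂ < m₃) :
    ∃ U : Set (ℂ × ℂ), IsOpen U ∧ Dense U ∧
      (∀ p ∈ U, p.1.im ≠ 0 ∧ p.2.im ≠ 0) ∧
      ∀ p ∈ U, (stmt4Set m₁ m₂ m₃ p.1 p.2).Finite ∧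
        (stmt4Set m₁ m₂ m₃ p.1 p.2).ncard = m₁ * (m₃ - m₂) := by
  refine ⟨{p | IsGeneric m₁ m₂ m₃ p.1 p.2}, isOpen_setOf_isGeneric m₁ m₂ m₃,
    dense_setOf_isGeneric m₁ m₂ m₃, fun p hp => ⟨hp.1, hp.2.1⟩, fun p hp => ?_⟩
  obtain ⟨n, rfl⟩ := Nat.exists_eq_add_of_le h₂₃.le
  have hinj := injOn_stmt4Set (m₁ := m₁) (m₂ := m₂) (m₃ := m₂ + n)
    (ne_zero_of_im_ne_zero hp.1) (ne_zero_of_im_ne_zero hp.2.1)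
  have himage : (fun q : ℝ × ℝ × ℂ => q.2.2) '' stmt4Set m₁ m₂ (m₂ + n) p.1 p.2 =
      Set.range (passageParam m₁ m₂ n p.1 p.2) :=
    (image_stmt4Set m₁ m₂ n p.1 p.2).trans (passageSet_eq_range h₁pos.ne' (by omega) hp)
  rw [Nat.add_sub_cancel_left]
  refine ⟨(himage ▸ Set.finite_range _).of_finite_image hinj, ?_⟩
  rw [← hinj.ncard_image, himage, Set.ncard_range_of_injective (passageParam_injective hp),
    Nat.card_eq_fintype_card, Fintype.card_prod, Fintype.card_fin, Fintype.card_fin]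

/-- Let `m₁`, `m₂` be odd positive integers and `m₃` an even positive integer
with `m₂ < m₃` and `m₁ < m₃`. Then there is an open dense subset `U` of `ℂ²`,
contained in `(ℂ \ ℝ) × (ℂ \ ℝ)`, such that for every `(ξ, η) ∈ U` the set of
triples `(a, b, τ) ∈ ℝ × ℝ × ℂ` with `a·τ^{m₁} = ξ` and
`b·τ^{m₂}·(τ − 1)^{m₃ − m₂} = η` is finite with exactly `m₁·(m₃ − m₂)`
elements. -/
theorem stmt4_count (m₁ m₂ m₃ : ℕ)
    (h₁odd : Odd m₁) (h₂odd : Odd m₂) (h₃even : Even m₃)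
    (h₁pos : 0 < m₁) (h₂pos : 0 < m₂) (h₃pos : 0 < m₃)
    (h₂₃ : m₂ < m₃) (h₁₃ : m₁ < m₃) :
    ∃ U : Set (ℂ × ℂ), IsOpen U ∧ Dense U ∧
      (∀ p ∈ U, p.1.im ≠ 0 ∧ p.2.im ≠ 0) ∧
      ∀ p ∈ U, (stmt4Set m₁ m₂ m₃ p.1 p.2).Finite ∧
        (stmt4Set m₁ m₂ m₃ p.1 p.2).ncard = m₁ * (m₃ - m₂) :=
  stmt4_count_general m₁ m₂ m₃ h₁pos h₂₃
end
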